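/- Let k be a field of characteristic p > 0. The truncated polynomial algebra k[x]/(x^{p−1}) is not isomorphic to the (non-complete) Jacobian algebra J(Q,W) = kQ/(∂_a W : a ∈ Q_1) for Q the quiver with one vertex and one loop x and any potential W ∈ k[x]·x³ given by a polynomial in the loop. Equivalently: there is no polynomial W(x) with only terms of degree ≥ 3 such that the ideal (W'(x) − (terms from cyclic derivative)) equals (x^{p−1}); concretely, for W = ∑_{n≥3} λ_n x^n, the cyclic derivative is ∂_x W = ∑_{n≥3} n λ_n x^{n−1}, and since p divides p, the coefficient of x^{p−1} in ∂_x W is p·λ_p = 0, so (∂_x W) ≠ (x^{p−1}). -/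

import Mathlib

/-! Comparing `k`-dimensions: `k[x]/(g)` has dimension `deg g`, so an isomorphism would force
`deg W' = p - 1`, whereas the coefficient of `x^{p-1}` in `W'` is `p λ_p = 0`. -/

open Polynomial

namespace Polynomial

theorem coeff_derivative_char_sub_one {R : Type*} [Semiring R] (p : ℕ) [CharP R p] (hp : 0 < p)
    (W : R[X]) : (derivative W).coeff (p - 1) = 0 := by
  rw [coeff_derivative, ← Nat.cast_succ, Nat.succ_eq_add_one, Nat.sub_add_cancel hp,
    CharP.cast_eq_zero, mul_zero]

theorem natDegree_derivative_ne_char_sub_one {R : Type*} [Semiring R] [Nontrivial R] (p : ℕ)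
    [CharP R p] (hp : 0 < p) (W : R[X]) : (derivative W).natDegree ≠ p - 1 := by
  intro hdeg
  have hzero : derivative W = 0 := by
    rw [← leadingCoeff_eq_zero, leadingCoeff, hdeg, coeff_derivative_char_sub_one p hp]
  have hp_one : p = 1 := by
    rw [hzero, natDegree_zero] at hdeg
    omega
  exact CharP.char_ne_one R p hp_one

end Polynomial

theorem stmt14_general (k : Type*) [Field k] (p : ℕ) [CharP k p] (hp : 0 < p)
    (W : Polynomial k) :
    IsEmpty ((Polynomial k ⧸ Ideal.span {Polynomial.derivative W}) ≃ₐ[k]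
      (Polynomial k ⧸ Ideal.span {(Polynomial.X : Polynomial k) ^ (p - 1)})) := by
  refine ⟨fun e => ?_⟩
  have hdim := e.toLinearEquiv.finrank_eq
  rw [finrank_quotient_span_eq_natDegree, finrank_quotient_span_eq_natDegree,
    natDegree_X_pow] at hdim
  exact natDegree_derivative_ne_char_sub_one p hp W hdim

/-- Let `k` be a field of characteristic `p > 0`.  The truncated
polynomial algebra `k[x]/(x^{p−1})` is not isomorphic to the (non-complete) Jacobian
algebra `J(Q,W) = k[x]/(∂_x W)` of the one-loop quiver for any potential
`W = ∑_{n ≥ 3} λ_n x^n` (a polynomial whose terms all have degree ≥ 3, with cyclic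
derivative `∂_x W = W' = ∑ n λ_n x^{n-1}`). -/
theorem stmt14 (k : Type*) [Field k] (p : ℕ) [CharP k p] (hp : 0 < p)
    (W : Polynomial k) (hW : ∀ n < 3, W.coeff n = 0) :
    IsEmpty ((Polynomial k ⧸ Ideal.span {Polynomial.derivative W}) ≃ₐ[k]
      (Polynomial k ⧸ Ideal.span {(Polynomial.X : Polynomial k) ^ (p - 1)})) :=
  stmt14_general k p hp W
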